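/- Assume T''(x₀) = 0. Then there exist δ₀ > 0 and C > 0 such that for every y ∈ Ω with 0 < |y − x₀| ≤ δ₀, one has |2π·g(x₀,y) − (T'''(x₀)/(6·T'(x₀)))·(y − x₀) − |T'(x₀)|²·conj(y − x₀)| ≤ C·|y − x₀|². -/

import Mathlib

/-!
Since `T x₀ = 0`, writing `h = y - x₀` and `a = T'(x₀)` the kernel reduces to
`2π g(x₀, y) = 1/h - a/T(y) + a·conj T(y)`. The derivative `a` is nonzero because `T` is
injective: at a critical point a holomorphic map is locally `T(x₀) + ψᵏ` with `k ≥ 2` and `ψ` a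
local homeomorphism, hence not injective. Taylor's formula with `T''(x₀) = 0` gives
`T(y) = a h + (T'''(x₀)/6) h³ + O(h⁴)`, so `T(y)/h → a`, the part
`1/h - a/T(y) - (T'''(x₀)/(6a)) h` is `O(h²)`, and so is `a·conj (T(y) - a h)`.
-/

open Complex

/-- The complex conjugate `g(x,y)` of the `x`-gradient of the regular part of the Green's
function: `g(x,y) = (1/(2π))·(T'(x)/(T(x)−T(y)) − conj(T(y))·T'(x)/(conj(T(y))·T(x)−1)
− 1/(x−y))`. -/
noncomputable def gfun (T : ℂ → ℂ) (x y : ℂ) : ℂ :=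
  (2 * (Real.pi : ℂ))⁻¹ *
    (deriv T x / (T x - T y)
      - (starRingEnd ℂ) (T y) * deriv T x / ((starRingEnd ℂ) (T y) * T x - 1)
      - 1 / (x - y))

open Filter Topology Asymptotics Set Nat ComplexConjugate

theorem AnalyticAt.isBigO_sub_taylor {𝕜 F : Type*} [NontriviallyNormedField 𝕜]
    [CharZero 𝕜] [NormedAddCommGroup F] [NormedSpace 𝕜 F] [CompleteSpace F] {f : 𝕜 → F}
    {x : 𝕜} (hf : AnalyticAt 𝕜 f x) (n : ℕ) :
    (fun y => f y - ∑ k ∈ Finset.range n, (k ! : 𝕜)⁻¹ • (y - x) ^ k • iteratedDeriv k f x)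
      =O[𝓝 x] fun y => ‖y - x‖ ^ n := by
  obtain ⟨p, r, hp⟩ := hf
  have hcoeff (k : ℕ) : p.coeff k = (k ! : 𝕜)⁻¹ • iteratedDeriv k f x := by
    rw [iteratedDeriv_eq_iteratedFDeriv, ← hp.factorial_smul, ← Nat.cast_smul_eq_nsmul 𝕜,
      inv_smul_smul₀ (by exact_mod_cast k.factorial_ne_zero)]
    rfl
  have hlim : Tendsto (· - x) (𝓝 x) (𝓝 0) := tendsto_sub_nhds_zero_iff.mpr tendsto_id
  refine ((hp.hasFPowerSeriesAt.isBigO_sub_partialSum_pow n).comp_tendsto hlim).congr_left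
    fun y => ?_
  simp only [Function.comp_apply, add_sub_cancel, FormalMultilinearSeries.partialSum,
    FormalMultilinearSeries.apply_eq_pow_smul_coeff, hcoeff, smul_comm ((y - x) ^ _)]

theorem HasDerivAt.isBigO_inv_of_eq_zero {𝕜 : Type*} [NontriviallyNormedField 𝕜] {f : 𝕜 → 𝕜}
    {a x : 𝕜} (hf : HasDerivAt f a x) (hfx : f x = 0) (ha : a ≠ 0) :
    (fun y => (f y)⁻¹) =O[𝓝[≠] x] fun y => ‖y - x‖⁻¹ := by
  have hslope := ((hasDerivAt_iff_tendsto_slope.mp hf).inv₀ ha).isBigO_one ℝ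
  have hinv : (fun y => (y - x)⁻¹) =O[𝓝[≠] x] fun y => ‖y - x‖⁻¹ :=
    isBigO_of_le _ fun y => by simp
  refine (hslope.mul hinv).congr' ?_ (.of_forall fun y => one_mul _)
  filter_upwards [self_mem_nhdsWithin] with y hy
  rw [slope_def_field, hfx, sub_zero, inv_div, div_mul_eq_mul_div,
    mul_inv_cancel₀ (sub_ne_zero.mpr hy), one_div]

theorem AnalyticAt.exists_analyticAt_pow_eq {g : ℂ → ℂ} {x : ℂ} (hg : AnalyticAt ℂ g x)
    (hgx : g x ≠ 0) {k : ℕ} (hk : k ≠ 0) : ∃ u : ℂ → ℂ, AnalyticAt ℂ u x ∧ ∀ z, u z ^ k = g z := by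
  -- normalising by `g x` keeps the principal branch of `(·) ^ (1/k)` near `1`, where it is analytic
  refine ⟨fun z => g x ^ (k⁻¹ : ℂ) * (g z / g x) ^ (k⁻¹ : ℂ), ?_, fun z => ?_⟩
  · refine analyticAt_const.mul ((hg.div analyticAt_const hgx).cpow analyticAt_const ?_)
    simp [div_self hgx, Complex.one_mem_slitPlane]
  · rw [mul_pow, Complex.cpow_nat_inv_pow _ hk, Complex.cpow_nat_inv_pow _ hk,
      mul_div_cancel₀ _ hgx]

theorem not_injOn_pow_of_nhds_le_map {X : Type*} [TopologicalSpace X] {ψ : X → ℂ} {x : X}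
    {s : Set X} (hψ : 𝓝 0 ≤ map ψ (𝓝 x)) (hs : s ∈ 𝓝 x) {k : ℕ} (hk : 2 ≤ k) :
    ¬ InjOn (fun z => ψ z ^ k) s := by
  intro hinj
  obtain ⟨ε, hε, hball⟩ := Metric.mem_nhds_iff.mp (hψ (image_mem_map hs))
  -- `ψ` attains both `t` and `t ζ`, `ζ` a primitive `k`-th root of unity: equal `k`-th powers
  set ζ := Complex.exp (2 * Real.pi * Complex.I / k)
  have hζ : IsPrimitiveRoot ζ k := Complex.isPrimitiveRoot_exp k (by omega)
  set t : ℂ := ((ε / 2 : ℝ) : ℂ)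
  have ht : t ∈ Metric.ball 0 ε := by
    rw [mem_ball_zero_iff, Complex.norm_real, Real.norm_of_nonneg (by positivity)]
    linarith
  have htζ : t * ζ ∈ Metric.ball 0 ε := by
    rwa [mem_ball_zero_iff, norm_mul, hζ.norm'_eq_one (by omega), mul_one, ← mem_ball_zero_iff]
  obtain ⟨z₁, hz₁, hψz₁⟩ := hball ht
  obtain ⟨z₂, hz₂, hψz₂⟩ := hball htζ
  have hz : z₁ = z₂ := hinj hz₁ hz₂ <| by
    simp only [hψz₁, hψz₂, mul_pow, hζ.pow_eq_one, mul_one]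
  have ht0 : t ≠ 0 := by simp [t, hε.ne']
  refine hζ.ne_one (by omega) (mul_left_cancel₀ ht0 ?_)
  rw [← hψz₂, ← hz, hψz₁, mul_one]

theorem AnalyticAt.deriv_ne_zero_of_injOn {T : ℂ → ℂ} {x₀ : ℂ} {s : Set ℂ}
    (hT : AnalyticAt ℂ T x₀) (hs : s ∈ 𝓝 x₀) (hinj : InjOn T s) : deriv T x₀ ≠ 0 := by
  intro hd
  have hT' : AnalyticAt ℂ (T · - T x₀) x₀ := hT.sub analyticAt_const
  have hord : 2 ≤ analyticOrderAt (T · - T x₀) x₀ := by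
    rw [show (2 : ℕ∞) = (2 : ℕ) from rfl, natCast_le_analyticOrderAt_iff_iteratedDeriv_eq_zero hT']
    intro i hi
    interval_cases i
    · simp
    · simpa [deriv_sub_const] using hd
  cases hn : analyticOrderAt (T · - T x₀) x₀ with
  | top =>
    have hconst : ∀ᶠ z in 𝓝[≠] x₀, T z = T x₀ ∧ z ∈ s := nhdsWithin_le_nhds <|
      ((analyticOrderAt_eq_top.mp hn).mono fun z hz => sub_eq_zero.mp hz).and hs
    obtain ⟨z, ⟨hTz, hz⟩, hzx⟩ := (hconst.and self_mem_nhdsWithin).exists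
    exact hzx (hinj hz (mem_of_mem_nhds hs) hTz)
  | coe n =>
    have hn2 : 2 ≤ n := by exact_mod_cast hn ▸ hord
    obtain ⟨g, hg, hgx, hTg⟩ := hT'.analyticOrderAt_eq_natCast.mp hn
    obtain ⟨u, hu, hug⟩ := hg.exists_analyticAt_pow_eq hgx (k := n) (by omega)
    set ψ : ℂ → ℂ := fun z => (z - x₀) * u z
    have hux : u x₀ ≠ 0 := fun h => hgx (by rw [← hug, h, zero_pow (n := n) (by omega)])
    have hψ : HasStrictDerivAt ψ (u x₀) x₀ := by
      simpa using
        HasStrictDerivAt.fun_mul ((hasStrictDerivAt_id x₀).sub_const x₀) hu.hasStrictDerivAt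
    have hψmap : 𝓝 0 ≤ map ψ (𝓝 x₀) := by
      rw [hψ.map_nhds_eq hux]; simp [ψ]
    have hTψ : ∀ᶠ z in 𝓝 x₀, T z - T x₀ = ψ z ^ n :=
      hTg.mono fun z hz => by rw [hz, smul_eq_mul, ← hug, ← mul_pow]
    exact not_injOn_pow_of_nhds_le_map hψmap (inter_mem hs hTψ) hn2 fun z₁ hz₁ z₂ hz₂ h =>
      hinj hz₁.1 hz₂.1 (sub_left_inj.mp (Eq.trans hz₁.2 (h.trans (Eq.symm hz₂.2))))

theorem two_pi_mul_gfun_of_eq_zero {T : ℂ → ℂ} {x₀ : ℂ} (hT0 : T x₀ = 0) (y : ℂ) :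
    2 * (Real.pi : ℂ) * gfun T x₀ y
      = (y - x₀)⁻¹ - deriv T x₀ / T y + deriv T x₀ * conj (T y) := by
  have hπ : (2 * (Real.pi : ℂ)) ≠ 0 := by simp [Real.pi_ne_zero]
  rw [gfun, ← mul_assoc, mul_inv_cancel₀ hπ, one_mul, hT0, ← neg_sub y x₀]
  simp only [mul_zero, zero_sub, one_div, div_neg]
  ring

theorem isBigO_two_pi_mul_gfun_sub {T : ℂ → ℂ} {x₀ : ℂ} (hT : AnalyticAt ℂ T x₀)
    (hT0 : T x₀ = 0) (ha : deriv T x₀ ≠ 0) (hT2 : iteratedDeriv 2 T x₀ = 0) :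
    (fun y => 2 * (Real.pi : ℂ) * gfun T x₀ y
        - iteratedDeriv 3 T x₀ / (6 * deriv T x₀) * (y - x₀)
        - (‖deriv T x₀‖ : ℂ) ^ 2 * conj (y - x₀)) =O[𝓝[≠] x₀] fun y => ‖y - x₀‖ ^ 2 := by
  set a := deriv T x₀
  set c := iteratedDeriv 3 T x₀ / 6
  set L : ℂ → ℂ := fun y => T y - a * (y - x₀)
  set R : ℂ → ℂ := fun y => L y - c * (y - x₀) ^ 3
  have hTa : HasDerivAt T a x₀ := hT.differentiableAt.hasDerivAt
  have hL : L =O[𝓝[≠] x₀] fun y => ‖y - x₀‖ ^ 2 := by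
    refine ((hT.isBigO_sub_taylor 2).mono nhdsWithin_le_nhds).congr_left fun y => ?_
    simp [L, Finset.sum_range_succ, hT0, a, mul_comm]
  have hR : R =O[𝓝[≠] x₀] fun y => ‖y - x₀‖ ^ 4 := by
    refine ((hT.isBigO_sub_taylor 4).mono nhdsWithin_le_nhds).congr_left fun y => ?_
    simp [R, L, Finset.sum_range_succ, hT0, hT2, a, c, factorial]
    ring
  have hN : (fun y => a * R y - c * (y - x₀) ^ 2 * L y) =O[𝓝[≠] x₀] fun y => ‖y - x₀‖ ^ 4 := by
    have hsq : (fun y => c * (y - x₀) ^ 2) =O[𝓝[≠] x₀] fun y => ‖y - x₀‖ ^ 2 :=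
      .of_bound ‖c‖ (.of_forall fun y => by simp)
    exact (hR.const_mul_left a).sub ((hsq.mul hL).congr_right fun y => by ring)
  have hD : (fun y => (a * (y - x₀) * T y)⁻¹) =O[𝓝[≠] x₀]
      fun y => ‖y - x₀‖⁻¹ * ‖y - x₀‖⁻¹ := by
    have hinv : (fun y => (y - x₀)⁻¹) =O[𝓝[≠] x₀] fun y => ‖y - x₀‖⁻¹ :=
      isBigO_of_le _ fun y => by simp
    refine ((hinv.const_mul_left a⁻¹).mul
      (hTa.isBigO_inv_of_eq_zero hT0 ha)).congr_left fun y => ?_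
    rw [mul_inv, mul_inv]
  have hconj : (fun y => a * conj (L y)) =O[𝓝[≠] x₀] fun y => ‖y - x₀‖ ^ 2 :=
    isBigO_norm_left.mp ((hL.norm_left.const_mul_left ‖a‖).congr_left fun y => by
      rw [norm_mul, Complex.norm_conj])
  have hcancel : (fun y => ‖y - x₀‖ ^ 4 * (‖y - x₀‖⁻¹ * ‖y - x₀‖⁻¹)) =ᶠ[𝓝[≠] x₀]
      fun y => ‖y - x₀‖ ^ 2 := by
    filter_upwards [self_mem_nhdsWithin] with y hy
    have hy' : ‖y - x₀‖ ≠ 0 := norm_ne_zero_iff.mpr (sub_ne_zero.mpr hy)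
    field_simp
  refine (((hN.mul hD).trans_eventuallyEq hcancel).add hconj).congr' ?_ .rfl
  filter_upwards [hTa.eventually_ne (c := 0) ha, self_mem_nhdsWithin] with y hTy hy
  have hy' : y - x₀ ≠ 0 := sub_ne_zero.mpr hy
  rw [two_pi_mul_gfun_of_eq_zero hT0, ← Complex.conj_mul' a]
  simp only [R, L, c, map_sub, map_mul]
  field_simp
  ring

theorem exists_closedBall_subset_forall_norm_le_of_isBigO {E F G : Type*} [PseudoMetricSpace E]
    [Norm F] [SeminormedAddCommGroup G] {f : E → F} {g : E → G} {x₀ : E} {s : Set E}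
    (hs : s ∈ 𝓝 x₀) (hfg : f =O[𝓝[≠] x₀] g) :
    ∃ δ > (0 : ℝ), ∃ C > (0 : ℝ), Metric.closedBall x₀ δ ⊆ s ∧
      ∀ y, y ≠ x₀ → dist y x₀ ≤ δ → ‖f y‖ ≤ C * ‖g y‖ := by
  obtain ⟨C, hC, hfgC⟩ := hfg.exists_pos
  obtain ⟨ε, hε, hbound⟩ := Metric.mem_nhdsWithin_iff.mp hfgC.bound
  obtain ⟨r, hr, hrs⟩ := Metric.mem_nhds_iff.mp hs
  refine ⟨min ε r / 2, by positivity, C, hC, ?_, fun y hy hyδ => hbound ⟨?_, hy⟩⟩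
  · exact (Metric.closedBall_subset_ball (by linarith [min_le_right ε r])).trans hrs
  · rw [Metric.mem_ball]; linarith [min_le_left ε r]

theorem stmt8_general
    (Ω : Set ℂ) (hΩo : IsOpen Ω)
    (x₀ : ℂ) (hx₀ : x₀ ∈ Ω)
    (T : ℂ → ℂ) (hTd : DifferentiableOn ℂ T Ω)
    (hTbij : Set.BijOn T Ω (Metric.ball 0 1))
    (hT0 : T x₀ = 0)
    (hT2 : iteratedDeriv 2 T x₀ = 0) :
    ∃ δ₀ > (0:ℝ), ∃ C > (0:ℝ), Metric.closedBall x₀ δ₀ ⊆ Ω ∧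
      ∀ y : ℂ, y ≠ x₀ → ‖y - x₀‖ ≤ δ₀ →
        ‖2 * (Real.pi : ℂ) * gfun T x₀ y
            - (iteratedDeriv 3 T x₀ / (6 * deriv T x₀)) * (y - x₀)
            - (((‖deriv T x₀‖ : ℝ) : ℂ) ^ 2) * (starRingEnd ℂ) (y - x₀)‖
          ≤ C * ‖y - x₀‖ ^ 2 := by
  have hΩ : Ω ∈ 𝓝 x₀ := hΩo.mem_nhds hx₀
  have hT : AnalyticAt ℂ T x₀ := hTd.analyticAt hΩ
  have ha : deriv T x₀ ≠ 0 := hT.deriv_ne_zero_of_injOn hΩ hTbij.injOn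
  obtain ⟨δ₀, hδ₀, C, hC, hball, hbound⟩ := exists_closedBall_subset_forall_norm_le_of_isBigO hΩ
    (isBigO_two_pi_mul_gfun_sub hT hT0 ha hT2)
  refine ⟨δ₀, hδ₀, C, hC, hball, fun y hy hyδ => ?_⟩
  simpa using hbound y hy (by rwa [dist_eq_norm])

/-- if `T''(x₀) = 0` then, for `y` close to `x₀`,
`2π·g(x₀,y) = (T'''(x₀)/(6T'(x₀)))·(y−x₀) + |T'(x₀)|²·conj(y−x₀) + O(|y−x₀|²)`. -/
theorem stmt8
    (Ω : Set ℂ) (hΩo : IsOpen Ω) (hΩb : Bornology.IsBounded Ω)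
    (hΩc : IsConnected Ω) (hΩsc : SimplyConnectedSpace Ω)
    (x₀ : ℂ) (hx₀ : x₀ ∈ Ω)
    (T : ℂ → ℂ) (hTd : DifferentiableOn ℂ T Ω)
    (hTbij : Set.BijOn T Ω (Metric.ball 0 1))
    (hT0 : T x₀ = 0)
    (hT2 : iteratedDeriv 2 T x₀ = 0) :
    ∃ δ₀ > (0:ℝ), ∃ C > (0:ℝ), Metric.closedBall x₀ δ₀ ⊆ Ω ∧
      ∀ y : ℂ, y ≠ x₀ → ‖y - x₀‖ ≤ δ₀ →
        ‖2 * (Real.pi : ℂ) * gfun T x₀ y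
            - (iteratedDeriv 3 T x₀ / (6 * deriv T x₀)) * (y - x₀)
            - (((‖deriv T x₀‖ : ℝ) : ℂ) ^ 2) * (starRingEnd ℂ) (y - x₀)‖
          ≤ C * ‖y - x₀‖ ^ 2 :=
  stmt8_general Ω hΩo x₀ hx₀ T hTd hTbij hT0 hT2
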